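/- Let K be a field of characteristic 0 and E a directed graph with E⁰ finite. Assume E contains an edge f ∈ E¹ and an infinite path p such that r(f) = s(p) and s(f) ≠ r(f) (so that f is the initial edge of the infinite path f·p). Then the elements 1 + 2f* and 1 + 2f are invertible in L_K(E) (with inverses 1 − 2f* and 1 − 2f, respectively), and the units 1 + 2f* and 1 + 2f generate a non-cyclic free subgroup of the multiplicative group L_K(E)^×. -/

import Mathlib

/-! Leavitt path algebra of a directed graph with finitely many vertices.
The graph is given by types `V` (vertices), `E` (edges) and maps `src rng : E → V`. -/

/-- A vertex is a sink if it emits no edges. -/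
def IsSink {V E : Type} (src : E → V) (v : V) : Prop := ∀ e : E, src e ≠ v

/-- A vertex is an infinite emitter if it emits infinitely many edges. -/
def IsInfEmitter {V E : Type} (src : E → V) (v : V) : Prop :=
  {e : E | src e = v}.Infinite

/-- A vertex is regular if it is neither a sink nor an infinite emitter. -/
def IsRegularVertex {V E : Type} (src : E → V) (v : V) : Prop :=
  ¬ IsSink src v ∧ ¬ IsInfEmitter src v

/-- The generator of the free algebra corresponding to a vertex `v`. -/
def vtx (K V E : Type) [Field K] (v : V) : FreeAlgebra K (V ⊕ E ⊕ E) :=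
  FreeAlgebra.ι K (Sum.inl v)

/-- The generator of the free algebra corresponding to an edge `e`. -/
def edg (K V E : Type) [Field K] (e : E) : FreeAlgebra K (V ⊕ E ⊕ E) :=
  FreeAlgebra.ι K (Sum.inr (Sum.inl e))

/-- The generator of the free algebra corresponding to a ghost edge `e*`. -/
def ghe (K V E : Type) [Field K] (e : E) : FreeAlgebra K (V ⊕ E ⊕ E) :=
  FreeAlgebra.ι K (Sum.inr (Sum.inr e))

/-- The defining relations of the Leavitt path algebra `L_K(E)`: (V), (E1), (E2),
(CK1), (CK2), together with `1 = Σ_{v ∈ E⁰} v` (which makes sense as `V` is finite). -/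
inductive LeavittRel (K V E : Type) [Field K] [Fintype V] (src rng : E → V) :
    FreeAlgebra K (V ⊕ E ⊕ E) → FreeAlgebra K (V ⊕ E ⊕ E) → Prop
  | vtx_same (v : V) :
      LeavittRel K V E src rng (vtx K V E v * vtx K V E v) (vtx K V E v)
  | vtx_ne (v v' : V) (h : v ≠ v') :
      LeavittRel K V E src rng (vtx K V E v * vtx K V E v') 0
  | src_edge (e : E) :
      LeavittRel K V E src rng (vtx K V E (src e) * edg K V E e) (edg K V E e)
  | edge_rng (e : E) :
      LeavittRel K V E src rng (edg K V E e * vtx K V E (rng e)) (edg K V E e)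
  | rng_ghost (e : E) :
      LeavittRel K V E src rng (vtx K V E (rng e) * ghe K V E e) (ghe K V E e)
  | ghost_src (e : E) :
      LeavittRel K V E src rng (ghe K V E e * vtx K V E (src e)) (ghe K V E e)
  | ck1_same (e : E) :
      LeavittRel K V E src rng (ghe K V E e * edg K V E e) (vtx K V E (rng e))
  | ck1_ne (e f : E) (h : e ≠ f) :
      LeavittRel K V E src rng (ghe K V E e * edg K V E f) 0
  | ck2 (v : V) (hreg : IsRegularVertex src v) :
      LeavittRel K V E src rng (vtx K V E v)
        (∑ e ∈ (Set.not_infinite.mp hreg.2).toFinset, edg K V E e * ghe K V E e)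
  | unit : LeavittRel K V E src rng (∑ v : V, vtx K V E v) 1

/-- The Leavitt path algebra `L_K(E)` of a graph with finitely many vertices. -/
abbrev LPA (K V E : Type) [Field K] [Fintype V] (src rng : E → V) : Type :=
  RingQuot (LeavittRel K V E src rng)

/-- The image of a vertex `v` in `L_K(E)`. -/
noncomputable def Vtx (K V E : Type) [Field K] [Fintype V] (src rng : E → V) (v : V) :
    LPA K V E src rng :=
  RingQuot.mkAlgHom K (LeavittRel K V E src rng) (vtx K V E v)

/-- The image of an edge `e` in `L_K(E)`. -/
noncomputable def Edg (K V E : Type) [Field K] [Fintype V] (src rng : E → V) (e : E) :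
    LPA K V E src rng :=
  RingQuot.mkAlgHom K (LeavittRel K V E src rng) (edg K V E e)

/-- The image of a ghost edge `e*` in `L_K(E)`. -/
noncomputable def Ghe (K V E : Type) [Field K] [Fintype V] (src rng : E → V) (e : E) :
    LPA K V E src rng :=
  RingQuot.mkAlgHom K (LeavittRel K V E src rng) (ghe K V E e)

/-!
`L_K(E)` acts on the `K`-vector space with basis the infinite paths of `E`: a vertex `v` keeps
the paths starting at `v` and kills the others, an edge `e` prepends `e`, and `e*` deletes a
leading `e`. Since `s(f) ≠ r(f)`, the lattice `ℤ p ⊕ ℤ (f·p)` is stable under `1 ± 2f*` and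
`1 ± 2f`, which act on it by the Sanov matrices `!![1, 2; 0, 1]`, `!![1, 0; 2, 1]` and their
inverses; the lattice embeds in the module because `K` has characteristic `0`. By ping-pong the
Sanov matrices generate a free group, so a relation between `1 + 2f*` and `1 + 2f` would give one
between them. The inverses come from `f² = (f*)² = 0`, again because `s(f) ≠ r(f)`.
-/

open Function Finsupp

namespace Units

variable {R : Type*} [Ring R]

def oneAddOfMulSelfEqZero (x : R) (hx : x * x = 0) : Rˣ where
  val := 1 + x
  inv := 1 - x
  val_inv := by noncomm_ring; simp [hx]
  inv_val := by noncomm_ring; simp [hx]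

end Units

theorem two_mul_mul_self_eq_zero {R : Type*} [Ring R] {x : R} (hx : x * x = 0) :
    2 * x * (2 * x) = 0 := by
  simp [two_mul, add_mul, mul_add, hx]

namespace FreeGroup

variable {α G Q H P W : Type*} [Group G] [Monoid Q] [MulAction Q P] [Group H] [MulAction H W]
  {a : α → G} {b : α → H} {ρ : G →* Q} {ι : W → P}

theorem map_lift_smul_map_eq (h : ∀ x w, ρ (a x) • ι w = ι (b x • w))
    (g : FreeGroup α) (w : W) : ρ (lift a g) • ι w = ι (lift b g • w) := by
  induction g using FreeGroup.induction_on generalizing w with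
  | C1 => simp
  | of x => simpa using h x w
  | inv_of x _ =>
    simp only [_root_.map_inv, lift_apply_of]
    calc ρ (a x)⁻¹ • ι w = ρ (a x)⁻¹ • ρ (a x) • ι ((b x)⁻¹ • w) := by
          rw [h, smul_inv_smul]
      _ = ι ((b x)⁻¹ • w) := by
        rw [← mul_smul, ← _root_.map_mul, inv_mul_cancel, _root_.map_one, one_smul]
  | mul g g' hg hg' => simp only [_root_.map_mul, mul_smul, hg', hg]

theorem injective_lift_of_map_smul_map_eq [FaithfulSMul H W] (hι : Injective ι)
    (hb : Injective (lift b)) (h : ∀ x w, ρ (a x) • ι w = ι (b x • w)) :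
    Injective (lift a) := by
  refine (injective_iff_map_eq_one _).2 fun g hg => hb ?_
  rw [_root_.map_one]
  refine eq_of_smul_eq_smul fun w => hι ?_
  rw [← map_lift_smul_map_eq h, hg, _root_.map_one, one_smul, one_smul]

end FreeGroup

instance Matrix.faithfulSMul_vec {n R : Type*} [Fintype n] [DecidableEq n] [CommRing R] :
    FaithfulSMul (Matrix n n R) (n → R) :=
  ⟨Matrix.ext_iff_smul.mpr⟩

section Sanov

open scoped Pointwise

def sanovA : GL (Fin 2) ℤ :=
  ⟨!![1, 2; 0, 1], !![1, -2; 0, 1], by simp [Matrix.one_fin_two], by simp [Matrix.one_fin_two]⟩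

def sanovB : GL (Fin 2) ℤ :=
  ⟨!![1, 0; 2, 1], !![1, 0; -2, 1], by simp [Matrix.one_fin_two], by simp [Matrix.one_fin_two]⟩

theorem sanovA_smul (v : Fin 2 → ℤ) : sanovA • v = ![v 0 + 2 * v 1, v 1] := by
  ext i; fin_cases i <;> simp [sanovA, Units.smul_def, Matrix.vecHead, Matrix.vecTail]

theorem sanovA_inv_smul (v : Fin 2 → ℤ) : sanovA⁻¹ • v = ![v 0 - 2 * v 1, v 1] := by
  ext i; fin_cases i <;> simp [sanovA, Units.smul_def, Matrix.vecHead, Matrix.vecTail]; ring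

theorem sanovB_smul (v : Fin 2 → ℤ) : sanovB • v = ![v 0, 2 * v 0 + v 1] := by
  ext i; fin_cases i <;> simp [sanovB, Units.smul_def, Matrix.vecHead, Matrix.vecTail]

theorem sanovB_inv_smul (v : Fin 2 → ℤ) : sanovB⁻¹ • v = ![v 0, v 1 - 2 * v 0] := by
  ext i; fin_cases i <;> simp [sanovB, Units.smul_def, Matrix.vecHead, Matrix.vecTail]; ring

def sanovGen : Bool → GL (Fin 2) ℤ
  | true => sanovA
  | false => sanovB

/-- Ping-pong sets in the coordinates `(x, y) = (v 0, v 1)`; the boundary lines are split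
between them so that all four sets are pairwise disjoint. -/
def sanovX : Bool → Set {v : Fin 2 → ℤ // v ≠ 0}
  | true => {v | v.1 1 = 0 ∨ v.1 1 ^ 2 < v.1 0 * v.1 1}
  | false => {v | v.1 0 = 0 ∨ v.1 0 ^ 2 ≤ v.1 0 * v.1 1}

def sanovY : Bool → Set {v : Fin 2 → ℤ // v ≠ 0}
  | true => {v | v.1 0 * v.1 1 ≤ -v.1 1 ^ 2 ∧ v.1 1 ≠ 0}
  | false => {v | v.1 0 * v.1 1 < -v.1 0 ^ 2 ∧ v.1 0 ≠ 0}

theorem disjoint_sanovX_true_false : Disjoint (sanovX true) (sanovX false) := by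
  refine Set.disjoint_left.2 ?_
  rintro v (h | h) (h' | h')
  · exact v.2 (funext fun i => by fin_cases i <;> simp [h, h'])
  · rw [h] at h'
    have h0 : v.1 0 = 0 := by simpa using h'
    exact v.2 (funext fun i => by fin_cases i <;> simp [h, h0])
  · rw [h'] at h
    nlinarith [sq_nonneg (v.1 1)]
  · nlinarith [sq_nonneg (v.1 0 - v.1 1)]

theorem disjoint_sanovY_true_false : Disjoint (sanovY true) (sanovY false) := by
  refine Set.disjoint_left.2 ?_
  rintro v ⟨h, -⟩ ⟨h', -⟩
  nlinarith [sq_nonneg (v.1 0 + v.1 1)]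

theorem disjoint_sanovX_sanovY (s t : Bool) : Disjoint (sanovX s) (sanovY t) := by
  refine Set.disjoint_left.2 ?_
  cases s <;> cases t <;> rintro v (h | h) ⟨h', h''⟩
  · exact h'' h
  · nlinarith [sq_nonneg (v.1 0)]
  · rw [h] at h'
    exact h'' (by simpa using h')
  · have : 0 < v.1 1 ^ 2 := by positivity
    nlinarith [sq_nonneg (v.1 0)]
  · have : 0 < v.1 0 ^ 2 := by positivity
    rw [h] at h'
    linarith
  · nlinarith [sq_nonneg (v.1 0), sq_nonneg (v.1 1)]
  · exact h'' h
  · nlinarith [sq_nonneg (v.1 1)]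

theorem sanovGen_smul_compl_sanovY_subset (t : Bool) :
    sanovGen t • (sanovY t)ᶜ ⊆ sanovX t := by
  rintro _ ⟨v, hv, rfl⟩
  cases t
  · simp only [sanovY, Set.mem_compl_iff, Set.mem_ofPred_eq, not_and_or, not_lt, not_not] at hv
    simp only [sanovX, sanovGen, Set.mem_ofPred_eq, Units.smul_coe, sanovB_smul,
      Matrix.cons_val_zero, Matrix.cons_val_one]
    rcases hv with hv | hv
    · right; nlinarith
    · left; exact hv
  · simp only [sanovY, Set.mem_compl_iff, Set.mem_ofPred_eq, not_and_or, not_le, not_not] at hv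
    simp only [sanovX, sanovGen, Set.mem_ofPred_eq, Units.smul_coe, sanovA_smul,
      Matrix.cons_val_zero, Matrix.cons_val_one]
    rcases hv with hv | hv
    · right; nlinarith
    · left; exact hv

theorem sanovGen_inv_smul_compl_sanovX_subset (t : Bool) :
    (sanovGen t)⁻¹ • (sanovX t)ᶜ ⊆ sanovY t := by
  rintro _ ⟨v, hv, rfl⟩
  cases t
  · simp only [sanovX, Set.mem_compl_iff, Set.mem_ofPred_eq, not_or, not_le] at hv
    simp only [sanovY, sanovGen, Set.mem_ofPred_eq, Units.smul_coe, sanovB_inv_smul,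
      Matrix.cons_val_zero, Matrix.cons_val_one]
    exact ⟨by nlinarith [hv.2], hv.1⟩
  · simp only [sanovX, Set.mem_compl_iff, Set.mem_ofPred_eq, not_or, not_lt] at hv
    simp only [sanovY, sanovGen, Set.mem_ofPred_eq, Units.smul_coe, sanovA_inv_smul,
      Matrix.cons_val_zero, Matrix.cons_val_one]
    exact ⟨by nlinarith [hv.2], hv.1⟩

theorem sanov_injective : Injective (FreeGroup.lift sanovGen) :=
  FreeGroup.injective_lift_of_ping_pong sanovGen sanovX sanovY
    (by rintro (_ | _)
        exacts [⟨⟨![0, 1], by simp⟩, Or.inl rfl⟩, ⟨⟨![1, 0], by simp⟩, Or.inl rfl⟩])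
    (pairwise_disjoint_on_bool.2 disjoint_sanovX_true_false)
    (pairwise_disjoint_on_bool.2 disjoint_sanovY_true_false)
    disjoint_sanovX_sanovY sanovGen_smul_compl_sanovY_subset
    sanovGen_inv_smul_compl_sanovX_subset

end Sanov

namespace LPA

variable (K V E : Type) [Field K] [Fintype V] (src rng : E → V)

theorem Vtx_mul_Vtx_of_ne {v w : V} (h : v ≠ w) :
    Vtx K V E src rng v * Vtx K V E src rng w = 0 := by
  rw [Vtx, Vtx, ← map_mul, RingQuot.mkAlgHom_rel K (LeavittRel.vtx_ne v w h), map_zero]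

theorem Vtx_src_mul_Edg (e : E) :
    Vtx K V E src rng (src e) * Edg K V E src rng e = Edg K V E src rng e := by
  rw [Vtx, Edg, ← map_mul, RingQuot.mkAlgHom_rel K (LeavittRel.src_edge e)]

theorem Edg_mul_Vtx_rng (e : E) :
    Edg K V E src rng e * Vtx K V E src rng (rng e) = Edg K V E src rng e := by
  rw [Vtx, Edg, ← map_mul, RingQuot.mkAlgHom_rel K (LeavittRel.edge_rng e)]

theorem Vtx_rng_mul_Ghe (e : E) :
    Vtx K V E src rng (rng e) * Ghe K V E src rng e = Ghe K V E src rng e := by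
  rw [Vtx, Ghe, ← map_mul, RingQuot.mkAlgHom_rel K (LeavittRel.rng_ghost e)]

theorem Ghe_mul_Vtx_src (e : E) :
    Ghe K V E src rng e * Vtx K V E src rng (src e) = Ghe K V E src rng e := by
  rw [Vtx, Ghe, ← map_mul, RingQuot.mkAlgHom_rel K (LeavittRel.ghost_src e)]

variable {E src rng}

theorem Edg_mul_self {e : E} (h : src e ≠ rng e) :
    Edg K V E src rng e * Edg K V E src rng e = 0 :=
  calc Edg K V E src rng e * Edg K V E src rng e
      = Edg K V E src rng e * Vtx K V E src rng (rng e) *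
          (Vtx K V E src rng (src e) * Edg K V E src rng e) := by
        rw [Edg_mul_Vtx_rng, Vtx_src_mul_Edg]
    _ = Edg K V E src rng e * (Vtx K V E src rng (rng e) * Vtx K V E src rng (src e)) *
          Edg K V E src rng e := by
        simp only [mul_assoc]
    _ = 0 := by rw [Vtx_mul_Vtx_of_ne K V E src rng h.symm, mul_zero, zero_mul]

theorem Ghe_mul_self {e : E} (h : src e ≠ rng e) :
    Ghe K V E src rng e * Ghe K V E src rng e = 0 :=
  calc Ghe K V E src rng e * Ghe K V E src rng e
      = Ghe K V E src rng e * Vtx K V E src rng (src e) *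
          (Vtx K V E src rng (rng e) * Ghe K V E src rng e) := by
        rw [Ghe_mul_Vtx_src, Vtx_rng_mul_Ghe]
    _ = Ghe K V E src rng e * (Vtx K V E src rng (src e) * Vtx K V E src rng (rng e)) *
          Ghe K V E src rng e := by
        simp only [mul_assoc]
    _ = 0 := by rw [Vtx_mul_Vtx_of_ne K V E src rng h, mul_zero, zero_mul]

end LPA

section InfinitePaths

variable {V E : Type} {src rng : E → V}

def InfinitePath (src rng : E → V) : Type :=
  {q : ℕ → E // ∀ n, rng (q n) = src (q (n + 1))}

namespace InfinitePath

def head (q : InfinitePath src rng) : E := q.1 0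

def tail (q : InfinitePath src rng) : InfinitePath src rng :=
  ⟨fun n => q.1 (n + 1), fun n => q.2 (n + 1)⟩

def cons (e : E) (q : InfinitePath src rng) (h : src q.head = rng e) : InfinitePath src rng :=
  ⟨fun | 0 => e | n + 1 => q.1 n, by rintro (_ | n); exacts [h.symm, q.2 n]⟩

@[simp] theorem head_cons (e : E) (q : InfinitePath src rng) (h : src q.head = rng e) :
    (q.cons e h).head = e := rfl

@[simp] theorem tail_cons (e : E) (q : InfinitePath src rng) (h : src q.head = rng e) :
    (q.cons e h).tail = q := rfl

theorem src_head_tail (q : InfinitePath src rng) : src q.tail.head = rng q.head :=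
  (q.2 0).symm

theorem cons_head_tail (q : InfinitePath src rng) : q.tail.cons q.head q.src_head_tail = q :=
  Subtype.ext (funext fun n => by cases n <;> rfl)

theorem head_ne_of_src_head_eq {q : InfinitePath src rng} {f : E} (hq : src q.head = rng f)
    (hf : src f ≠ rng f) : q.head ≠ f :=
  fun h => hf (h ▸ hq)

end InfinitePath

end InfinitePaths

section PathOperators

open InfinitePath
open scoped Classical

variable (K : Type) {V E : Type} [Field K] {src rng : E → V}

abbrev PathModule (K : Type) [Field K] (src rng : E → V) : Type :=
  InfinitePath src rng →₀ K

noncomputable def vertexOp (v : V) : Module.End K (PathModule K src rng) :=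
  linearCombination K fun q => if src q.head = v then single q 1 else 0

noncomputable def edgeOp (e : E) : Module.End K (PathModule K src rng) :=
  linearCombination K fun q => if h : src q.head = rng e then single (q.cons e h) 1 else 0

noncomputable def ghostOp (e : E) : Module.End K (PathModule K src rng) :=
  linearCombination K fun q => if q.head = e then single q.tail 1 else 0

variable {K}

@[simp] theorem vertexOp_single (v : V) (q : InfinitePath src rng) (c : K) :
    vertexOp K v (single q c) = if src q.head = v then single q c else 0 := by
  simp [vertexOp, smul_ite]

@[simp] theorem edgeOp_single (e : E) (q : InfinitePath src rng) (c : K) :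
    edgeOp K e (single q c) = if h : src q.head = rng e then single (q.cons e h) c else 0 := by
  simp [edgeOp, smul_dite]

@[simp] theorem ghostOp_single (e : E) (q : InfinitePath src rng) (c : K) :
    ghostOp K e (single q c) = if q.head = e then single q.tail c else 0 := by
  simp [ghostOp, smul_ite]

theorem vertexOp_mul_self (v : V) :
    vertexOp K v * vertexOp K v = (vertexOp K v : Module.End K (PathModule K src rng)) :=
  lhom_ext fun q c => by by_cases h : src q.head = v <;> simp [h]

theorem vertexOp_mul_vertexOp_of_ne {v w : V} (hvw : v ≠ w) :
    vertexOp K v * vertexOp K w = (0 : Module.End K (PathModule K src rng)) :=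
  lhom_ext fun q c => by by_cases h : src q.head = w <;> simp [h, hvw.symm]

theorem vertexOp_src_mul_edgeOp (e : E) :
    vertexOp K (src e) * edgeOp K e = (edgeOp K e : Module.End K (PathModule K src rng)) :=
  lhom_ext fun q c => by by_cases h : src q.head = rng e <;> simp [h]

theorem edgeOp_mul_vertexOp_rng (e : E) :
    edgeOp K e * vertexOp K (rng e) = (edgeOp K e : Module.End K (PathModule K src rng)) :=
  lhom_ext fun q c => by by_cases h : src q.head = rng e <;> simp [h]

theorem vertexOp_rng_mul_ghostOp (e : E) :
    vertexOp K (rng e) * ghostOp K e = (ghostOp K e : Module.End K (PathModule K src rng)) :=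
  lhom_ext fun q c => by
    by_cases h : q.head = e
    · subst h
      simp [src_head_tail]
    · simp [h]

theorem ghostOp_mul_vertexOp_src (e : E) :
    ghostOp K e * vertexOp K (src e) = (ghostOp K e : Module.End K (PathModule K src rng)) :=
  lhom_ext fun q c => by
    by_cases h : q.head = e
    · simp [h]
    · by_cases h' : src q.head = src e <;> simp [h, h']

theorem ghostOp_mul_edgeOp (e : E) :
    ghostOp K e * edgeOp K e = (vertexOp K (rng e) : Module.End K (PathModule K src rng)) :=
  lhom_ext fun q c => by by_cases h : src q.head = rng e <;> simp [h]

theorem ghostOp_mul_edgeOp_of_ne {e f : E} (hef : e ≠ f) :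
    ghostOp K e * edgeOp K f = (0 : Module.End K (PathModule K src rng)) :=
  lhom_ext fun q c => by by_cases h : src q.head = rng f <;> simp [h, hef.symm]

theorem edgeOp_mul_ghostOp_single (e : E) (q : InfinitePath src rng) (c : K) :
    (edgeOp K e * ghostOp K e : Module.End K (PathModule K src rng)) (single q c) =
      if q.head = e then single q c else 0 := by
  by_cases h : q.head = e
  · subst h
    simp [src_head_tail, cons_head_tail]
  · simp [h]

theorem vertexOp_eq_sum_edgeOp_mul_ghostOp (v : V) (S : Finset E)
    (hS : ∀ e, e ∈ S ↔ src e = v) :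
    vertexOp K v = ∑ e ∈ S, (edgeOp K e * ghostOp K e : Module.End K (PathModule K src rng)) :=
  lhom_ext fun q c => by
    simp only [LinearMap.sum_apply, edgeOp_mul_ghostOp_single, vertexOp_single,
      Finset.sum_ite_eq, hS]

theorem sum_vertexOp [Fintype V] :
    ∑ v, vertexOp K v = (1 : Module.End K (PathModule K src rng)) :=
  lhom_ext fun q c => by simp [LinearMap.sum_apply]

end PathOperators

section PathRepresentation

variable (K V E : Type) [Field K] (src rng : E → V)

noncomputable def freePathRep :
    FreeAlgebra K (V ⊕ E ⊕ E) →ₐ[K] Module.End K (PathModule K src rng) :=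
  FreeAlgebra.lift K (Sum.elim (vertexOp K) (Sum.elim (edgeOp K) (ghostOp K)))

variable {K V E src rng}

@[simp] theorem freePathRep_vtx (v : V) :
    freePathRep K V E src rng (vtx K V E v) = vertexOp K v := by
  simp [freePathRep, vtx]

@[simp] theorem freePathRep_edg (e : E) :
    freePathRep K V E src rng (edg K V E e) = edgeOp K e := by
  simp [freePathRep, edg]

@[simp] theorem freePathRep_ghe (e : E) :
    freePathRep K V E src rng (ghe K V E e) = ghostOp K e := by
  simp [freePathRep, ghe]

variable [Fintype V]

theorem freePathRep_eq_of_leavittRel ⦃x y : FreeAlgebra K (V ⊕ E ⊕ E)⦄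
    (h : LeavittRel K V E src rng x y) :
    freePathRep K V E src rng x = freePathRep K V E src rng y := by
  induction h with
  | vtx_same v => simp [vertexOp_mul_self]
  | vtx_ne v w h => simp [vertexOp_mul_vertexOp_of_ne h]
  | src_edge e => simp [vertexOp_src_mul_edgeOp]
  | edge_rng e => simp [edgeOp_mul_vertexOp_rng]
  | rng_ghost e => simp [vertexOp_rng_mul_ghostOp]
  | ghost_src e => simp [ghostOp_mul_vertexOp_src]
  | ck1_same e => simp [ghostOp_mul_edgeOp]
  | ck1_ne e f h => simp [ghostOp_mul_edgeOp_of_ne h]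
  | ck2 v hreg =>
    simpa using vertexOp_eq_sum_edgeOp_mul_ghostOp v _ fun _ => Set.Finite.mem_toFinset _
  | unit => simp [sum_vertexOp]

variable (K V E src rng) in
noncomputable def pathRep : LPA K V E src rng →ₐ[K] Module.End K (PathModule K src rng) :=
  RingQuot.liftAlgHom K ⟨freePathRep K V E src rng, freePathRep_eq_of_leavittRel⟩

@[simp] theorem pathRep_Edg (e : E) :
    pathRep K V E src rng (Edg K V E src rng e) = edgeOp K e := by
  simp [pathRep, Edg]

@[simp] theorem pathRep_Ghe (e : E) :
    pathRep K V E src rng (Ghe K V E src rng e) = ghostOp K e := by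
  simp [pathRep, Ghe]

end PathRepresentation

section TwoPaths

open InfinitePath

variable {K V E : Type} [Field K] {src rng : E → V} {f : E} {q : InfinitePath src rng}

variable (K) in
noncomputable def pathPair (q : InfinitePath src rng) (hq : src q.head = rng f)
    (c : Fin 2 → ℤ) : PathModule K src rng :=
  single q (c 0 : K) + single (q.cons f hq) (c 1 : K)

theorem pathPair_injective [CharZero K] (hq : src q.head = rng f) (hf : src f ≠ rng f) :
    Injective (pathPair K q hq) := by
  have hne : q ≠ q.cons f hq := fun h => head_ne_of_src_head_eq hq hf (congrArg head h)
  intro c d h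
  have h0 := DFunLike.congr_fun h q
  have h1 := DFunLike.congr_fun h (q.cons f hq)
  simp [pathPair, hne, hne.symm] at h0 h1
  ext i; fin_cases i <;> assumption

variable [Fintype V]

theorem pathRep_one_add_two_mul_Ghe_pathPair (hq : src q.head = rng f) (hf : src f ≠ rng f)
    (c : Fin 2 → ℤ) :
    pathRep K V E src rng (1 + 2 * Ghe K V E src rng f) (pathPair K q hq c) =
      pathPair K q hq (sanovA • c) := by
  rw [sanovA_smul]
  simp [pathPair, head_ne_of_src_head_eq hq hf, two_mul, single_add]
  abel

theorem pathRep_one_add_two_mul_Edg_pathPair (hq : src q.head = rng f) (hf : src f ≠ rng f)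
    (c : Fin 2 → ℤ) :
    pathRep K V E src rng (1 + 2 * Edg K V E src rng f) (pathPair K q hq c) =
      pathPair K q hq (sanovB • c) := by
  rw [sanovB_smul]
  simp [pathPair, hq, hf, two_mul, single_add]
  abel

end TwoPaths

/-- Let `K` be a field of characteristic `0` and `E` a directed graph with finitely
many vertices containing an edge `f` and an infinite path `p` (a sequence of edges
with `r(pₙ) = s(p_{n+1})`) such that `r(f) = s(p)` and `s(f) ≠ r(f)` (so `f` is the
initial edge of the infinite path `f·p`). Then `1 + 2f*` and `1 + 2f` are invertible in
`L_K(E)` (with inverses `1 − 2f*` and `1 − 2f`), and these units generate a non-cyclic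
free subgroup of `L_K(E)ˣ`. -/
theorem free_subgroup_of_initial_edge_of_infinite_path
    (K V E : Type) [Field K] [CharZero K] [Fintype V] (src rng : E → V)
    (f : E) (p : ℕ → E) (hp : ∀ n : ℕ, rng (p n) = src (p (n + 1)))
    (hfp : rng f = src (p 0)) (hsf : src f ≠ rng f) :
    ∃ a b : (LPA K V E src rng)ˣ,
      (a : LPA K V E src rng) = 1 + 2 * Ghe K V E src rng f ∧
      (↑(a⁻¹) : LPA K V E src rng) = 1 - 2 * Ghe K V E src rng f ∧
      (b : LPA K V E src rng) = 1 + 2 * Edg K V E src rng f ∧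
      (↑(b⁻¹) : LPA K V E src rng) = 1 - 2 * Edg K V E src rng f ∧
      Function.Injective (FreeGroup.lift fun t : Bool => if t then a else b) := by
  set q : InfinitePath src rng := ⟨p, hp⟩
  have hq : src q.head = rng f := hfp.symm
  set a := Units.oneAddOfMulSelfEqZero _ (two_mul_mul_self_eq_zero (LPA.Ghe_mul_self K V hsf))
  set b := Units.oneAddOfMulSelfEqZero _ (two_mul_mul_self_eq_zero (LPA.Edg_mul_self K V hsf))
  refine ⟨a, b, rfl, rfl, rfl, rfl, ?_⟩
  refine FreeGroup.injective_lift_of_map_smul_map_eq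
    (ρ := (pathRep K V E src rng).toMonoidHom.comp (Units.coeHom _))
    (pathPair_injective (K := K) hq hsf) sanov_injective ?_
  rintro (_ | _) c
  · exact pathRep_one_add_two_mul_Edg_pathPair (K := K) hq hsf c
  · exact pathRep_one_add_two_mul_Ghe_pathPair (K := K) hq hsf c
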